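/- arXiv:1208.4462 — 3 statements merged into one kernel-verified Lean document; each statement's English description precedes it below -/
import Mathlib

section
/- Let D⪰ be a convex cone in a real vector space L and D≺ ⊆ L with D⪰ ∩ D≺ = ∅, and let f ∉ D⪰ ∪ D≺. Then posi(D⪰ ∪ {f}) ∩ D≺ = ∅ if and only if f ∉ shull(D≺) ∪ (shull(D≺) − D⪰). -/
open Pointwise

/-- A convex cone: closed under positive scaling and addition. -/
def IsConvexCone {V : Type*} [AddCommGroup V] [Module ℝ V] (C : Set V) : Prop :=
  (∀ l : ℝ, 0 < l → ∀ x ∈ C, l • x ∈ C) ∧ (∀ x ∈ C, ∀ y ∈ C, x + y ∈ C)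

/-- The positive linear hull: the smallest convex cone containing a set. -/
def posi {V : Type*} [AddCommGroup V] [Module ℝ V] (K : Set V) : Set V :=
  ⋂₀ {C : Set V | IsConvexCone C ∧ K ⊆ C}

/-- The positive scalar hull of a set of gambles. -/
def shull {V : Type*} [AddCommGroup V] [Module ℝ V] (S : Set V) : Set V :=
  {x | ∃ f ∈ S, ∃ l : ℝ, 0 < l ∧ x = l • f}

lemma posi_isConvexCone {V : Type*} [AddCommGroup V] [Module ℝ V] (K : Set V) :
    IsConvexCone (posi K) := by
  constructor
  · intro l hl x hx C hC
    exact hC.1.1 l hl x (hx C hC)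
  · intro x hx y hy C hC
    exact hC.1.2 x (hx C hC) y (hy C hC)

lemma subset_posi {V : Type*} [AddCommGroup V] [Module ℝ V] (K : Set V) : K ⊆ posi K :=
  fun _ hx C hC => hC.2 hx

lemma posi_min {V : Type*} [AddCommGroup V] [Module ℝ V] {K C : Set V}
    (h : IsConvexCone C) (hKC : K ⊆ C) : posi K ⊆ C :=
  fun _ hx => hx C ⟨h, hKC⟩

theorem limbo_condition {V : Type*} [AddCommGroup V] [Module ℝ V]
    (Dacc Drej : Set V) (f : V)
    (hcone : IsConvexCone Dacc) (hnc : Dacc ∩ Drej = ∅)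
    (hf : f ∉ Dacc ∪ Drej) :
    posi (Dacc ∪ {f}) ∩ Drej = ∅ ↔
      f ∉ shull Drej ∪ (shull Drej - Dacc) := by
  have hfposi : f ∈ posi (Dacc ∪ {f}) := subset_posi _ (Or.inr rfl)
  have hpc := posi_isConvexCone (Dacc ∪ {f})
  constructor
  · intro h hmem
    rcases hmem with ⟨g, hg, l, hl, hfe⟩ | hmem
    · have h1 : (l⁻¹ : ℝ) • f ∈ posi (Dacc ∪ {f}) :=
        hpc.1 _ (by positivity) f hfposi
      have hg' : (l⁻¹ : ℝ) • f = g := by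
        rw [hfe, smul_smul, inv_mul_cancel₀ hl.ne', one_smul]
      have : g ∈ posi (Dacc ∪ {f}) ∩ Drej := ⟨hg' ▸ h1, hg⟩
      rw [h] at this; exact this
    · rw [Set.mem_sub] at hmem
      obtain ⟨x, hx, d, hd, hxd⟩ := hmem
      obtain ⟨g, hg, l, hl, hxe⟩ := hx
      have hgeq : g = (l⁻¹ : ℝ) • f + (l⁻¹ : ℝ) • d := by
        have : x = f + d := by rw [← hxd]; abel
        rw [this] at hxe
        have := congrArg (fun y => (l⁻¹ : ℝ) • y) hxe
        simp only [smul_smul, inv_mul_cancel₀ hl.ne', one_smul, smul_add] at this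
        exact this.symm
      have h1 : (l⁻¹ : ℝ) • f ∈ posi (Dacc ∪ {f}) := hpc.1 _ (by positivity) f hfposi
      have h2 : (l⁻¹ : ℝ) • d ∈ posi (Dacc ∪ {f}) :=
        subset_posi _ (Or.inl (hcone.1 _ (by positivity) d hd))
      have : g ∈ posi (Dacc ∪ {f}) ∩ Drej := ⟨hgeq ▸ hpc.2 _ h1 _ h2, hg⟩
      rw [h] at this; exact this
  · intro hnot
    set S : Set V := Dacc ∪ {x | ∃ l : ℝ, 0 < l ∧ x = l • f} ∪
        {x | ∃ d ∈ Dacc, ∃ l : ℝ, 0 < l ∧ x = d + l • f} with hS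
    have hScone : IsConvexCone S := by
      constructor
      · rintro l hl x ((hx | ⟨m, hm, rfl⟩) | ⟨d, hd, m, hm, rfl⟩)
        · exact Or.inl (Or.inl (hcone.1 l hl x hx))
        · exact Or.inl (Or.inr ⟨l * m, by positivity, smul_smul l m f⟩)
        · exact Or.inr ⟨l • d, hcone.1 l hl d hd, l * m, by positivity,
            by rw [smul_add, smul_smul]⟩
      · rintro x ((hx | ⟨m, hm, rfl⟩) | ⟨d, hd, m, hm, rfl⟩)
          y ((hy | ⟨n, hn, rfl⟩) | ⟨e, he, n, hn, rfl⟩)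
        · exact Or.inl (Or.inl (hcone.2 x hx y hy))
        · exact Or.inr ⟨x, hx, n, hn, rfl⟩
        · exact Or.inr ⟨x + e, hcone.2 x hx e he, n, hn, by abel⟩
        · exact Or.inr ⟨y, hy, m, hm, by abel⟩
        · exact Or.inl (Or.inr ⟨m + n, by positivity, by rw [add_smul]⟩)
        · exact Or.inr ⟨e, he, m + n, by positivity, by rw [add_smul]; abel⟩
        · exact Or.inr ⟨d + y, hcone.2 d hd y hy, m, hm, by abel⟩
        · exact Or.inr ⟨d, hd, m + n, by positivity, by rw [add_smul]; abel⟩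
        · exact Or.inr ⟨d + e, hcone.2 d hd e he, m + n, by positivity,
            by rw [add_smul]; abel⟩
    have hsub : posi (Dacc ∪ {f}) ⊆ S := by
      apply posi_min hScone
      rintro x (hx | rfl)
      · exact Or.inl (Or.inl hx)
      · exact Or.inl (Or.inr ⟨1, one_pos, (one_smul ℝ x).symm⟩)
    ext y
    simp only [Set.mem_inter_iff, Set.mem_empty_iff_false, iff_false, not_and]
    intro hy hyr
    rcases hsub hy with (hy' | ⟨l, hl, rfl⟩) | ⟨d, hd, l, hl, heq⟩
    · exact absurd (Set.mem_inter hy' hyr) (by rw [hnc]; exact id)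
    · exact hnot (Or.inl ⟨l • f, hyr, l⁻¹, by positivity,
        by rw [smul_smul, inv_mul_cancel₀ hl.ne', one_smul]⟩)
    · refine hnot (Or.inr ?_)
      rw [Set.mem_sub]
      refine ⟨(l⁻¹ : ℝ) • y, ⟨y, hyr, l⁻¹, by positivity, rfl⟩,
        (l⁻¹ : ℝ) • d, hcone.1 _ (by positivity) d hd, ?_⟩
      rw [heq, smul_add, smul_smul, inv_mul_cancel₀ hl.ne', one_smul]
      abel
end

section
/- Let M be a model without confusion: M⪰ a convex cone, M⪰ ∩ M≺ = ∅, and shull(M≺) ∪ (shull(M≺) − M⪰) ⊆ M≺. Define M≻ = M⪰ ∩ (−M≺). Then M⪰ + M≻ = M≻ (sweetened deals: adding an acceptable gamble to a favourable one yields a favourable gamble). -/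
open Pointwise

theorem sweetened_deals {V : Type*} [AddCommGroup V] [Module ℝ V]
    (Macc Mrej : Set V)
    (hcone : IsConvexCone Macc)
    (hnc : Macc ∩ Mrej = ∅)
    (hnl : shull Mrej ∪ (shull Mrej - Macc) ⊆ Mrej) :
    Macc + (Macc ∩ (-Mrej)) = Macc ∩ (-Mrej) := by
  obtain ⟨hscale, hadd⟩ := hcone
  ext x
  constructor
  · rintro ⟨a, ha, m, ⟨hm1, hm2⟩, rfl⟩
    refine ⟨hadd a ha m hm1, ?_⟩
    have : -(a + m) ∈ shull Mrej - Macc := by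
      rw [Set.mem_sub]
      exact ⟨-m, ⟨-m, hm2, 1, one_pos, (one_smul ℝ _).symm⟩, a, ha, by abel⟩
    exact hnl (Or.inr this)
  · rintro ⟨hx1, hx2⟩
    refine ⟨(2:ℝ)⁻¹ • x, hscale _ (by norm_num) x hx1,
      (2:ℝ)⁻¹ • x, ⟨hscale _ (by norm_num) x hx1, ?_⟩, ?_⟩
    · show -((2:ℝ)⁻¹ • x) ∈ Mrej
      have : -((2:ℝ)⁻¹ • x) ∈ shull Mrej :=
        ⟨-x, hx2, (2:ℝ)⁻¹, by norm_num, by rw [smul_neg]⟩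
      exact hnl (Or.inl this)
    · show (2:ℝ)⁻¹ • x + (2:ℝ)⁻¹ • x = x
      rw [← add_smul]; norm_num
end

section
/- A pair M = (M⪰, M≺) of subsets of L, with given background model S = (S⪰, S≺) satisfying 0 ∈ S⪰, is a model without confusion extending S if and only if: (AR1) S⪰ ⊆ M⪰ and S≺ ⊆ M≺; (AR2) 0 ∉ M≺; (AR3) M⪰ is a convex cone; and (AR4) shull(M≺) − M⪰ ⊆ M≺. Here 'model without confusion extending S' means M⪰ is a convex cone, M⪰ ∩ M≺ = ∅, shull(M≺) ∪ (shull(M≺) − M⪰) ⊆ M≺, and S⪰ ⊆ M⪰, S≺ ⊆ M≺. -/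
open Pointwise

theorem char_AR {V : Type*} [AddCommGroup V] [Module ℝ V]
    (Sacc Srej Macc Mrej : Set V)
    (hScone : IsConvexCone Sacc) (hSzero : (0 : V) ∈ Sacc)
    (hSnc : Sacc ∩ Srej = ∅)
    (hSnl : shull Srej ∪ (shull Srej - Sacc) ⊆ Srej) :
    (IsConvexCone Macc ∧ Macc ∩ Mrej = ∅ ∧
        shull Mrej ∪ (shull Mrej - Macc) ⊆ Mrej ∧ Sacc ⊆ Macc ∧ Srej ⊆ Mrej) ↔
      ((Sacc ⊆ Macc ∧ Srej ⊆ Mrej) ∧ (0 : V) ∉ Mrej ∧ IsConvexCone Macc ∧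
        shull Mrej - Macc ⊆ Mrej) := by
  constructor
  · rintro ⟨hcone, hdisj, hnl, hSa, hSr⟩
    refine ⟨⟨hSa, hSr⟩, ?_, hcone, fun x hx => hnl (Or.inr hx)⟩
    intro h0
    have : (0:V) ∈ Macc ∩ Mrej := ⟨hSa hSzero, h0⟩
    rw [hdisj] at this; exact this
  · rintro ⟨⟨hSa, hSr⟩, h0, hcone, hnl⟩
    have hzM : (0:V) ∈ Macc := hSa hSzero
    have hsh : shull Mrej ⊆ Mrej := by
      intro x hx
      exact hnl ⟨x, hx, 0, hzM, by simp⟩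
    refine ⟨hcone, ?_, ?_, hSa, hSr⟩
    · ext x
      simp only [Set.mem_inter_iff, Set.mem_empty_iff_false, iff_false, not_and]
      intro hxa hxr
      exact h0 (hnl ⟨x, ⟨x, hxr, 1, one_pos, (one_smul ℝ x).symm⟩, x, hxa, by simp⟩)
    · rintro x (hx | hx)
      exacts [hsh hx, hnl hx]
end
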